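/- arXiv:1803.03555 — 4 statements merged into one kernel-verified Lean document; each statement's English description precedes it below -/
import Mathlib

section
/- Let λ be a partition of n with all parts odd, let σ ∈ S_n have cycle type λ, and let π ∈ S_n be an m-involution (m ≥ 1) such that π σ π⁻¹ = σ⁻¹. Then (n − ℓ(λ))/2 ≤ m ≤ (n − m_o(λ))/2. -/
/-- `ℓ(λ)`: the number of parts of a partition. -/
def Nat.Partition.length {n : ℕ} (μ : Nat.Partition n) : ℕ :=
  Multiset.card μ.parts

/-- `m_o(λ)`: the number of distinct part-sizes of `λ` occurring with odd multiplicity. -/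
def Nat.Partition.oddMultCount {n : ℕ} (μ : Nat.Partition n) : ℕ :=
  (μ.parts.toFinset.filter fun i => Odd (μ.parts.count i)).card

/-- `σ ∈ S_n` has cycle type `λ` (a partition of `n`, counting fixed points as cycles of
length `1`) iff the Mathlib cycle type of `σ` (which omits fixed points) is the multiset of
parts of `λ` different from `1`. -/
def Equiv.Perm.hasCycleType {n : ℕ} (σ : Equiv.Perm (Fin n)) (l : Nat.Partition n) : Prop :=
  σ.cycleType = l.parts.filter fun i => i ≠ 1

/-!
Write `Fix π` for the fixed points of `π`; since `π` is a product of `m` disjoint transpositions,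
`|Fix π| = n - 2m`, so the claim is `m_o(λ) ≤ |Fix π| ≤ ℓ(λ)`.

From `π σ^k = σ^(-k) π`, two fixed points `x`, `y = σ^k x` of `π` on one `σ`-cycle satisfy
`σ^(2k) x = x`; as `σ` has odd order this forces `y = x`. So every cycle of `σ` carries at most
one point of `Fix π`, which gives `|Fix π| ≤ ℓ(λ)`.

`π` maps each `σ`-cycle of length `i` onto a `σ`-cycle of length `i`, so the set of points on
such cycles, of size `i · mult_i(λ)`, is `π`-stable. When `mult_i(λ)` is odd this size is odd
(every `i` is odd), and the involution `π` has a fixed point there. Distinct such `i` give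
distinct fixed points, so `m_o(λ) ≤ |Fix π|`.
-/

open Equiv Finset

theorem Multiset.odd_lcm {s : Multiset ℕ} (h : ∀ i ∈ s, Odd i) : Odd s.lcm := by
  induction s using Multiset.induction_on with
  | empty => simp
  | cons a s ih =>
    rw [Multiset.lcm_cons]
    have ha := h a (Multiset.mem_cons_self a s)
    have hs := ih fun i hi => h i (Multiset.mem_cons_of_mem hi)
    exact (ha.mul hs).of_dvd_nat (Nat.lcm_dvd_mul a s.lcm)

namespace Equiv.Perm

theorem hasCycleType.parts_eq {n : ℕ} {σ : Perm (Fin n)} {l : n.Partition}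
    (hσ : σ.hasCycleType l) : l.parts = σ.partition.parts := by
  have hones : l.parts.filter (fun i => ¬i ≠ 1) = Multiset.replicate (l.parts.count 1) 1 := by
    simp only [ne_eq, not_not]
    exact Multiset.filter_eq' l.parts 1
  have hsplit := Multiset.filter_add_not (fun i => i ≠ 1) l.parts
  rw [← hσ, hones] at hsplit
  have hcount : l.parts.count 1 = n - #σ.support := by
    have := congrArg Multiset.sum hsplit
    rw [Multiset.sum_add, sum_cycleType, Multiset.sum_replicate, smul_eq_mul, mul_one,
      l.parts_sum] at this
    omega
  rw [parts_partition, ← hsplit, hcount, Fintype.card_fin]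

variable {α : Type*}

theorem exists_apply_eq_self_of_odd_card {π : Perm α} (hπ : π * π = 1) {s : Finset α}
    (hs : ∀ x, π x ∈ s ↔ x ∈ s) (hodd : Odd #s) : ∃ x ∈ s, π x = x := by
  have : Fact (Nat.Prime 2) := ⟨Nat.prime_two⟩
  obtain ⟨⟨x, hx⟩, hfix⟩ := exists_fixed_point_of_prime (p := 2) (n := 1)
    (σ := π.subtypePerm hs) (by simpa [← Nat.not_even_iff_odd, even_iff_two_dvd] using hodd)
    (by ext; simp [sq, hπ])
  exact ⟨x, hx, congrArg Subtype.val hfix⟩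

theorem eq_of_sameCycle_of_apply_eq_self {σ π : Perm α} (hσ : Odd (orderOf σ))
    (hinv : π * σ * π⁻¹ = σ⁻¹) {x y : α} (hx : π x = x) (hy : π y = y)
    (hxy : σ.SameCycle x y) : x = y := by
  obtain ⟨k, rfl⟩ := hxy
  have hflip : (σ ^ k) x = (σ ^ (-k)) x := by
    conv_lhs => rw [← hy]
    have hx' : π⁻¹ x = x := by rw [Perm.inv_eq_iff_eq, hx]
    rw [zpow_neg, ← inv_zpow, ← hinv, conj_zpow, mul_apply, mul_apply, hx']
  have hper : (σ ^ (2 * k)) x = x := by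
    rw [two_mul, zpow_add, mul_apply, hflip, ← mul_apply, ← zpow_add, add_neg_cancel, zpow_zero,
      one_apply]
  obtain ⟨t, ht⟩ := hσ
  -- `2` is invertible modulo the odd order of `σ`
  have hsq : (σ ^ (2 * k)) ^ (t + 1) = σ ^ k := by
    rw [← zpow_natCast, ← zpow_mul, show 2 * k * ((t + 1 : ℕ) : ℤ) = (orderOf σ : ℤ) * k + k by
      rw [ht]; push_cast; ring, zpow_add, zpow_mul, zpow_natCast, pow_orderOf_eq_one, one_zpow,
      one_mul]
  rw [← hsq, pow_apply_eq_self_of_apply_eq_self hper]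

variable [Fintype α] [DecidableEq α]

theorem odd_orderOf_of_forall_odd_cycleType {σ : Perm α} (h : ∀ i ∈ σ.cycleType, Odd i) :
    Odd (orderOf σ) :=
  lcm_cycleType σ ▸ Multiset.odd_lcm h

theorem mul_self_eq_one_of_cycleType_eq_replicate_two {π : Perm α} {m : ℕ}
    (hπ : π.cycleType = Multiset.replicate m 2) : π * π = 1 := by
  rw [← sq, ← orderOf_dvd_iff_pow_eq_one, ← lcm_cycleType, hπ]
  exact Multiset.lcm_dvd.mpr fun b hb => (Multiset.eq_of_mem_replicate hb).dvd

theorem card_compl_support_add_of_cycleType_eq_replicate_two {π : Perm α} {m : ℕ}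
    (hπ : π.cycleType = Multiset.replicate m 2) : #π.supportᶜ + 2 * m = Fintype.card α := by
  rw [← card_compl_add_card π.support, ← sum_cycleType, hπ, Multiset.sum_replicate, smul_eq_mul,
    mul_comm]

theorem cycleOf_conj_apply (f g : Perm α) (x : α) :
    (g * f * g⁻¹).cycleOf (g x) = g * f.cycleOf x * g⁻¹ := by
  ext y
  simp [cycleOf_apply, sameCycle_conj, apply_ite g]

/-- `orderOf (σ.cycleOf x)` is the length of the `σ`-cycle through `x`, fixed points included. -/
theorem card_filter_orderOf_cycleOf_eq (σ : Perm α) (i : ℕ) :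
    #{x | orderOf (σ.cycleOf x) = i} = i * σ.partition.parts.count i := by
  rw [parts_partition, Multiset.count_add, Multiset.count_replicate]
  rcases eq_or_ne i 1 with rfl | hi
  · have hfix : ({x | orderOf (σ.cycleOf x) = 1} : Finset α) = σ.supportᶜ := by
      ext x; simp [cycleOf_eq_one_iff]
    have hnone : σ.cycleType.count 1 = 0 :=
      Multiset.count_eq_zero.mpr fun h => (one_lt_of_mem_cycleType h).false
    rw [hfix, card_compl, hnone, if_pos rfl]; ring
  · rw [if_neg (Ne.symm hi), add_zero, cycleType_def, Multiset.count_map]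
    set T := σ.cycleFactorsFinset.filter (i = #·.support)
    have hmaps : ∀ x ∈ ({x | orderOf (σ.cycleOf x) = i} : Finset α), σ.cycleOf x ∈ T := by
      intro x hx
      have hx : orderOf (σ.cycleOf x) = i := (mem_filter.mp hx).2
      have hσx : σ x ≠ x := fun h => hi (by rw [← hx, (cycleOf_eq_one_iff σ).mpr h, orderOf_one])
      refine mem_filter.mpr ⟨cycleOf_mem_cycleFactorsFinset_iff.mpr (mem_support.mpr hσx), ?_⟩
      rw [← (σ.isCycle_cycleOf hσx).orderOf, hx]
    have hfiber : ∀ c ∈ T,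
        #{x ∈ ({x | orderOf (σ.cycleOf x) = i} : Finset α) | σ.cycleOf x = c} = i := by
      intro c hc
      obtain ⟨hc, hci⟩ := mem_filter.mp hc
      rw [hci]
      congr 1
      ext x
      simp only [mem_filter, mem_univ, true_and]
      rw [← eq_cycleOf_of_mem_cycleFactorsFinset_iff σ c hc]
      exact ⟨fun h => h.2.symm, fun h => ⟨h ▸ (mem_cycleFactorsFinset_iff.mp hc).1.orderOf, h.symm⟩⟩
    rw [card_eq_sum_card_fiberwise hmaps, sum_congr rfl hfiber, sum_const, smul_eq_mul, mul_comm]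
    rfl

theorem orderOf_cycleOf_apply_eq {σ π : Perm α} (hinv : π * σ * π⁻¹ = σ⁻¹) (x : α) :
    orderOf (σ.cycleOf (π x)) = orderOf (σ.cycleOf x) := by
  have hσ : π * σ⁻¹ * π⁻¹ = σ := by rw [← conj_inv, hinv, inv_inv]
  conv_lhs => rw [← hσ]
  rw [cycleOf_conj_apply, ← MulAut.conj_apply, MulEquiv.orderOf_eq,
    ← orderOf_inv (σ.cycleOf x), cycleOf_inv]
  congr!

theorem card_compl_support_le_card_parts_partition {σ π : Perm α}
    (hinv : π * σ * π⁻¹ = σ⁻¹) (hσ : Odd (orderOf σ)) :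
    #π.supportᶜ ≤ Multiset.card σ.partition.parts := by
  have hcycles : #(π.supportᶜ ∩ σ.support) ≤ Multiset.card σ.cycleType := by
    rw [cycleType_def, Multiset.card_map]
    refine card_le_card_of_injOn σ.cycleOf (fun x hx => ?_) (fun x hx y hy hxy => ?_)
    · exact cycleOf_mem_cycleFactorsFinset_iff.mpr (mem_inter.mp hx).2
    · simp only [coe_inter, Set.mem_inter_iff, mem_coe, mem_compl, notMem_support] at hx hy
      exact eq_of_sameCycle_of_apply_eq_self hσ hinv hx.1 hy.1
        ((sameCycle_iff_cycleOf_eq_of_mem_support hx.2 hy.2).mpr hxy)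
  have hfixed : #(π.supportᶜ \ σ.support) ≤ Fintype.card α - #σ.support := by
    rw [← card_compl]
    exact card_le_card fun x hx => mem_compl.mpr (mem_sdiff.mp hx).2
  rw [parts_partition, Multiset.card_add, Multiset.card_replicate,
    ← card_inter_add_card_sdiff π.supportᶜ σ.support]
  exact add_le_add hcycles hfixed

theorem card_filter_odd_count_le_card_compl_support {σ π : Perm α}
    (hinv : π * σ * π⁻¹ = σ⁻¹) (hπ : π * π = 1) (hodd : ∀ i ∈ σ.cycleType, Odd i) :
    #{i ∈ σ.partition.parts.toFinset | Odd (σ.partition.parts.count i)} ≤ #π.supportᶜ := by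
  refine card_le_card_of_surjOn (fun x => orderOf (σ.cycleOf x)) fun i hi => ?_
  obtain ⟨hi, hcount⟩ := mem_filter.mp (mem_coe.mp hi)
  have hiodd : Odd i := by
    rcases Multiset.mem_add.mp (Multiset.mem_toFinset.mp hi) with h | h
    · exact hodd i h
    · exact Multiset.eq_of_mem_replicate h ▸ odd_one
  obtain ⟨x, hx, hπx⟩ := exists_apply_eq_self_of_odd_card hπ
    (s := {x | orderOf (σ.cycleOf x) = i})
    (fun x => by simp only [mem_filter, mem_univ, true_and, orderOf_cycleOf_apply_eq hinv])
    (card_filter_orderOf_cycleOf_eq σ i ▸ hiodd.mul hcount)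
  exact ⟨x, mem_compl.mpr (notMem_support.mpr hπx), (mem_filter.mp hx).2⟩

end Equiv.Perm

theorem involution_inverting_bounds_general {n : ℕ} (l : Nat.Partition n)
    (hodd : ∀ i ∈ l.parts, Odd i)
    (σ : Equiv.Perm (Fin n)) (hσ : σ.hasCycleType l)
    (m : ℕ) (π : Equiv.Perm (Fin n))
    (hπ : π.cycleType = Multiset.replicate m 2)
    (hinv : π * σ * π⁻¹ = σ⁻¹) :
    ((n : ℚ) - l.length) / 2 ≤ m ∧ (m : ℚ) ≤ ((n : ℚ) - l.oddMultCount) / 2 := by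
  have hparts := hσ.parts_eq
  have hoddσ : ∀ i ∈ σ.cycleType, Odd i := fun i hi =>
    hodd i (Multiset.mem_of_mem_filter ((show σ.cycleType = _ from hσ) ▸ hi))
  have hcard := Perm.card_compl_support_add_of_cycleType_eq_replicate_two hπ
  have hlower := Perm.card_compl_support_le_card_parts_partition hinv
    (Perm.odd_orderOf_of_forall_odd_cycleType hoddσ)
  have hupper := Perm.card_filter_odd_count_le_card_compl_support hinv
    (Perm.mul_self_eq_one_of_cycleType_eq_replicate_two hπ) hoddσ
  rw [Fintype.card_fin] at hcard
  rw [← hparts] at hlower hupper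
  have hlen : n ≤ 2 * m + l.length := by unfold Nat.Partition.length; omega
  have hmo : 2 * m + l.oddMultCount ≤ n := by unfold Nat.Partition.oddMultCount; omega
  have hlenℚ : (n : ℚ) ≤ 2 * m + l.length := by exact_mod_cast hlen
  have hmoℚ : 2 * (m : ℚ) + l.oddMultCount ≤ n := by exact_mod_cast hmo
  constructor <;> linarith

/-- Let `λ` be a partition of `n` with all parts odd, let `σ ∈ S_n` have cycle type `λ`,
and let `π` be an `m`-involution (`m ≥ 1`, i.e. a product of `m` pairwise disjoint
transpositions) with `π σ π⁻¹ = σ⁻¹`.  Then `(n − ℓ(λ))/2 ≤ m ≤ (n − m_o(λ))/2`. -/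
theorem involution_inverting_bounds {n : ℕ} (l : Nat.Partition n)
    (hodd : ∀ i ∈ l.parts, Odd i)
    (σ : Equiv.Perm (Fin n)) (hσ : σ.hasCycleType l)
    (m : ℕ) (hm : 1 ≤ m) (π : Equiv.Perm (Fin n))
    (hπ : π.cycleType = Multiset.replicate m 2)
    (hinv : π * σ * π⁻¹ = σ⁻¹) :
    ((n : ℚ) - l.length) / 2 ≤ m ∧ (m : ℚ) ≤ ((n : ℚ) - l.oddMultCount) / 2 :=
  involution_inverting_bounds_general l hodd σ hσ m π hπ hinv
end

section
/- Let λ be a partition of n with all parts odd and let σ ∈ S_n have cycle type λ. Then for every integer m with (n − ℓ(λ))/2 ≤ m ≤ (n − m_o(λ))/2 there exists a permutation π ∈ S_n that is a product of exactly m pairwise disjoint transpositions (the identity if m = 0) such that π σ π⁻¹ = σ⁻¹. -/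
/-!
An odd cycle `x ↦ x + 1` of length `2j + 1` is inverted by `x ↦ -x`, a product of `j`
transpositions, while two cycles of the same length `k`, arranged as `σ ⊕ σ⁻¹`, are
inverted by swapping the two copies, a product of `k` transpositions. Cutting `λ` into
single parts and pairs of equal parts, each pair therefore adds one transposition to the
minimum `(n - ℓ(λ))/2`, and `λ` contains up to `(ℓ(λ) - m_o(λ))/2` disjoint pairs of
equal parts.
-/

open Equiv Multiset

namespace Equiv.Perm

variable {α β : Type*} [Fintype α] [DecidableEq α] [Fintype β] [DecidableEq β]

theorem cycleType_permCongr (e : α ≃ β) (σ : Perm α) :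
    (e.permCongr σ).cycleType = σ.cycleType := by
  let f : α ≃ {_b : β // True} := e.trans (subtypeUnivEquiv fun _ => trivial).symm
  have : e.permCongr σ = σ.extendDomain f := by
    ext b
    rw [extendDomain_apply_subtype σ f trivial]
    simp [f]
  rw [this, cycleType_extendDomain]

theorem cycleType_sumCongr (σ : Perm α) (τ : Perm β) :
    (sumCongr σ τ).cycleType = σ.cycleType + τ.cycleType := by
  have hσ : sumCongr σ (1 : Perm β) = σ.extendDomain (sumIsLeft (β := β)).symm := by
    ext (a | b)
    · rfl
    · rw [extendDomain_apply_not_subtype _ _ (by simp)]; rfl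
  have hτ : sumCongr (1 : Perm α) τ = τ.extendDomain (sumIsRight (α := α)).symm := by
    ext (a | b)
    · rw [extendDomain_apply_not_subtype _ _ (by simp)]; rfl
    · rfl
  have hdisj : Disjoint (sumCongr σ 1) (sumCongr 1 τ) := by
    rintro (a | b) <;> simp
  rw [← mul_one σ, ← one_mul τ, ← sumCongr_mul, hdisj.cycleType_mul, hσ, hτ,
    cycleType_extendDomain, cycleType_extendDomain, mul_one, one_mul]

theorem cycleType_eq_replicate_of_sq_eq_one {σ : Perm α} (h : σ ^ 2 = 1) :
    σ.cycleType = replicate (σ.support.card / 2) 2 := by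
  have hσ := cycleType_of_pow_prime_eq_one h
  have hsum := sum_cycleType σ
  rw [hσ, sum_replicate, smul_eq_mul] at hsum
  rw [hσ, ← hsum, Nat.mul_div_cancel _ two_pos]

end Equiv.Perm

theorem Multiset.two_mul_sum_map_div_two_add_card {s : Multiset ℕ} (hs : ∀ k ∈ s, Odd k) :
    2 * (s.map (· / 2)).sum + card s = s.sum := by
  induction s using Multiset.induction_on with
  | empty => simp
  | cons k s ih =>
    obtain ⟨j, rfl⟩ := hs k (mem_cons_self k s)
    have := ih fun i hi => hs i (mem_cons_of_mem hi)
    simp only [map_cons, sum_cons, card_cons]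
    omega

theorem Multiset.exists_le_card_eq {α : Type*} {s : Multiset α} {n : ℕ} (h : n ≤ card s) :
    ∃ t ≤ s, card t = n := by
  obtain ⟨t, ht⟩ := card_pos_iff_exists_mem.mp
    (by rw [card_powersetCard]; exact Nat.choose_pos h : 0 < card (powersetCard n s))
  exact ⟨t, mem_powersetCard.mp ht⟩

theorem Multiset.exists_add_self_le_and_two_mul_card_add_eq {α : Type*} [DecidableEq α]
    (s : Multiset α) :
    ∃ p, p + p ≤ s ∧
      2 * card p + (s.toFinset.filter fun a => Odd (s.count a)).card = card s := by
  refine ⟨∑ a ∈ s.toFinset, (s.count a / 2) • {a}, ?_, ?_⟩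
  · calc ∑ a ∈ s.toFinset, (s.count a / 2) • {a} + ∑ a ∈ s.toFinset, (s.count a / 2) • {a}
        = ∑ a ∈ s.toFinset, (s.count a / 2 + s.count a / 2) • ({a} : Multiset α) := by
          rw [← Finset.sum_add_distrib]; simp only [add_nsmul]
      _ ≤ ∑ a ∈ s.toFinset, s.count a • {a} :=
          Finset.sum_le_sum fun a _ => nsmul_le_nsmul_left (zero_le _) (by omega)
      _ = s := toFinset_sum_count_nsmul_eq s
  · have hcount (c : ℕ) : 2 * (c / 2) + (if Odd c then 1 else 0) = c := by
      simp only [Nat.odd_iff]; split_ifs <;> omega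
    rw [card_sum, Finset.card_filter, Finset.mul_sum, ← Finset.sum_add_distrib,
      ← toFinset_sum_count_eq]
    simp only [card_nsmul, card_singleton, mul_one, hcount]

open Perm

def StronglyReversible (α : Type*) [Fintype α] [DecidableEq α] (c : Multiset ℕ) (w : ℕ) : Prop :=
  ∃ σ π : Perm α, σ.cycleType = c ∧ π.cycleType = replicate w 2 ∧ π * σ * π⁻¹ = σ⁻¹

namespace StronglyReversible

variable {α β : Type*} [Fintype α] [DecidableEq α] [Fintype β] [DecidableEq β]
  {c d : Multiset ℕ} {v w : ℕ}

theorem of_equiv (e : α ≃ β) : StronglyReversible α c w → StronglyReversible β c w := by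
  rintro ⟨σ, π, hσ, hπ, hrev⟩
  refine ⟨e.permCongrHom σ, e.permCongrHom π, ?_, ?_, ?_⟩
  · rwa [permCongrHom_coe, cycleType_permCongr]
  · rwa [permCongrHom_coe, cycleType_permCongr]
  · rw [← map_inv, ← map_mul, ← map_mul, hrev, map_inv]

theorem sum : StronglyReversible α c v → StronglyReversible β d w →
    StronglyReversible (α ⊕ β) (c + d) (v + w) := by
  rintro ⟨σ, π, hσ, hπ, hrev⟩ ⟨σ', π', hσ', hπ', hrev'⟩
  refine ⟨Perm.sumCongr σ σ', Perm.sumCongr π π', by rw [cycleType_sumCongr, hσ, hσ'],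
    by rw [cycleType_sumCongr, hπ, hπ', replicate_add], ?_⟩
  rw [sumCongr_inv, sumCongr_mul, sumCongr_mul, sumCongr_inv, hrev, hrev']

end StronglyReversible

theorem stronglyReversible_sumCongr_inv {α : Type*} [Fintype α] [DecidableEq α] (σ : Perm α) :
    StronglyReversible (α ⊕ α) (σ.cycleType + σ.cycleType) (Fintype.card α) := by
  refine ⟨Perm.sumCongr σ σ⁻¹, Equiv.sumComm α α, ?_, ?_, ?_⟩
  · rw [cycleType_sumCongr, cycleType_inv]
  · have hsupp : Perm.support (Equiv.sumComm α α) = Finset.univ := by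
      ext (a | a) <;> simp
    rw [cycleType_eq_replicate_of_sq_eq_one (by ext (a | a) <;> rfl), hsupp, Finset.card_univ,
      Fintype.card_sum, ← two_mul, Nat.mul_div_cancel_left _ two_pos]
  · ext (a | a) <;> rfl

theorem stronglyReversible_finRotate (j : ℕ) :
    StronglyReversible (Fin (2 * j + 1)) (({2 * j + 1} : Multiset ℕ).filter (· ≠ 1)) j := by
  refine ⟨finRotate _, Equiv.neg _, ?_, ?_, ?_⟩
  · rcases Nat.eq_zero_or_pos j with rfl | hj
    · rw [finRotate_one, ← Perm.one_def, cycleType_one]; rfl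
    · rw [cycleType_finRotate_of_le (by omega), Multiset.filter_singleton, if_pos (by omega)]
  · -- `ZMod (2 * j + 1)` is definitionally `Fin (2 * j + 1)`
    have hfix (x : Fin (2 * j + 1)) : -x = x ↔ x = 0 :=
      (ZMod.neg_eq_self_iff (n := 2 * j + 1) x).trans (or_iff_left (by omega))
    have hsupp : (Equiv.neg (Fin (2 * j + 1))).support = {0}ᶜ := by
      ext x
      simp [hfix]
    rw [cycleType_eq_replicate_of_sq_eq_one (by ext x; simp [sq]), hsupp, Finset.card_compl,
      Finset.card_singleton, Fintype.card_fin, Nat.add_sub_cancel,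
      Nat.mul_div_cancel_left _ two_pos]
  · refine Equiv.ext fun x => ?_
    rw [eq_comm, Perm.inv_eq_iff_eq]
    simp [finRotate_apply]

theorem stronglyReversible_fin_sum_of_odd {t : Multiset ℕ} (ht : ∀ k ∈ t, Odd k) :
    StronglyReversible (Fin t.sum) (t.filter (· ≠ 1)) (t.map (· / 2)).sum := by
  induction t using Multiset.induction_on with
  | empty => exact ⟨1, 1, cycleType_one, cycleType_one, by group⟩
  | cons k t ih =>
    obtain ⟨j, rfl⟩ := ht k (mem_cons_self _ t)
    have h := (stronglyReversible_finRotate j).sum (ih fun i hi => ht i (mem_cons_of_mem hi))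
    rw [← filter_add, Multiset.singleton_add] at h
    rw [map_cons, sum_cons ((2 * j + 1) / 2), show (2 * j + 1) / 2 = j by omega]
    exact h.of_equiv (finSumFinEquiv.trans (finCongr (sum_cons _ _).symm))

theorem stronglyReversible_fin_sum_of_add_self_le {s p : Multiset ℕ} (hs : ∀ k ∈ s, Odd k)
    (hp : p + p ≤ s) :
    StronglyReversible (Fin s.sum) (s.filter (· ≠ 1)) ((s.map (· / 2)).sum + card p) := by
  set r := s - (p + p)
  have hrp : r + (p + p) = s := tsub_add_cancel_of_le hp
  have hodd_r : ∀ k ∈ r, Odd k := fun k hk => hs k (mem_of_le tsub_le_self hk)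
  have hodd_p : ∀ k ∈ p, Odd k := fun k hk => hs k (mem_of_le ((le_add_right p p).trans hp) hk)
  obtain ⟨σ, -, hσ, -⟩ := stronglyReversible_fin_sum_of_odd hodd_p
  have h := (stronglyReversible_fin_sum_of_odd hodd_r).sum
    (hσ ▸ stronglyReversible_sumCongr_inv σ)
  have hw :
      (r.map (· / 2)).sum + Fintype.card (Fin p.sum) = (s.map (· / 2)).sum + card p := by
    have := two_mul_sum_map_div_two_add_card hodd_p
    rw [← hrp, Multiset.map_add, Multiset.map_add, sum_add, sum_add, Fintype.card_fin]
    omega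
  rw [← filter_add, ← filter_add, hrp, hw] at h
  exact h.of_equiv (Fintype.equivFinOfCardEq (by simp [← hrp]))

theorem StronglyReversible.exists_conj_eq_inv {α : Type*} [Fintype α] [DecidableEq α]
    {σ : Perm α} {w : ℕ} (h : StronglyReversible α σ.cycleType w) :
    ∃ π : Perm α, π.cycleType = replicate w 2 ∧ π * σ * π⁻¹ = σ⁻¹ := by
  obtain ⟨σ', π', hσ', hπ', hrev⟩ := h
  obtain ⟨τ, rfl⟩ := isConj_iff.mp (isConj_iff_cycleType_eq.mpr hσ')
  refine ⟨τ * π' * τ⁻¹, by rw [cycleType_conj, hπ'], ?_⟩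
  calc τ * π' * τ⁻¹ * (τ * σ' * τ⁻¹) * (τ * π' * τ⁻¹)⁻¹
      = τ * (π' * σ' * π'⁻¹) * τ⁻¹ := by group
    _ = (τ * σ' * τ⁻¹)⁻¹ := by rw [hrev]; group

/-- Let `λ` be a partition of `n` with all parts odd and let `σ ∈ S_n` have cycle type `λ`.
Then for every integer `m` with `(n − ℓ(λ))/2 ≤ m ≤ (n − m_o(λ))/2` there is a permutation
`π ∈ S_n` which is a product of exactly `m` pairwise disjoint transpositions (the identity
if `m = 0`) such that `π σ π⁻¹ = σ⁻¹`. -/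
theorem exists_involution_inverting {n : ℕ} (l : Nat.Partition n)
    (hodd : ∀ i ∈ l.parts, Odd i)
    (σ : Equiv.Perm (Fin n)) (hσ : σ.hasCycleType l) :
    ∀ m : ℕ, ((n : ℚ) - l.length) / 2 ≤ m → (m : ℚ) ≤ ((n : ℚ) - l.oddMultCount) / 2 →
      ∃ π : Equiv.Perm (Fin n), π.cycleType = Multiset.replicate m 2 ∧ π * σ * π⁻¹ = σ⁻¹ := by
  intro m hlow hupp
  set b := (l.parts.map (· / 2)).sum
  obtain ⟨P, hPP, hP⟩ := l.parts.exists_add_self_le_and_two_mul_card_add_eq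
  have hn : (2 * b + l.length : ℚ) = n := by
    exact_mod_cast l.parts_sum ▸ two_mul_sum_map_div_two_add_card hodd
  have hℓ : (2 * card P + l.oddMultCount : ℚ) = l.length := by exact_mod_cast hP
  have hbm : b ≤ m := by exact_mod_cast (by linarith : (b : ℚ) ≤ m)
  have hmP : m ≤ b + card P := by exact_mod_cast (by linarith : (m : ℚ) ≤ b + card P)
  obtain ⟨p, hpP, hp⟩ := exists_le_card_eq (show m - b ≤ card P by omega)
  have h := stronglyReversible_fin_sum_of_add_self_le hodd ((add_le_add hpP hpP).trans hPP)
  rw [hp, Nat.add_sub_cancel' hbm, l.parts_sum, ← hσ] at h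
  exact h.exists_conj_eq_inv
end

section
/- Let μ be a partition of n with distinct parts, let t be a μ-tableau, and let π ∈ S_n be an involution (π² = 1, π ≠ 1). Then ⟨π·e_t, e_t⟩ ≡ #{T ∈ supp(πt) ∩ supp(t) : π·T = T} (mod 2). -/
/-! Reduce modulo 2: the signs in `e_t` disappear, and since `σ ↦ {σt}` is injective on
`C_t`, `e_t` becomes the indicator of `supp(t)`, so `⟨π·e_t, e_t⟩ = ⟨e_{πt}, e_t⟩` is the
parity of `#(supp(πt) ∩ supp(t))`. This set is stable under the involution `T ↦ π·T`, whose
non-fixed points come in pairs. -/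

noncomputable section
open scoped Classical

/-- The cells of the Young diagram of a partition `μ` (given as a list of parts):
pairs of a row index `r` and a column index `c < μ_r`. -/
abbrev YoungCell (μ : List ℕ) := (r : Fin μ.length) × Fin (μ.get r)

/-- A `μ`-tableau: a bijective filling of the Young diagram of `μ` with the symbols
`1, …, n` (here: the elements of `Fin n`). -/
abbrev YoungTableau (n : ℕ) (μ : List ℕ) := YoungCell μ ≃ Fin n

/-- A family of rows is a `μ`-tabloid: row `r` has `μ_r` elements, the rows are pairwise
disjoint and cover `{1, …, n}`. -/
def IsTabloid (n : ℕ) (μ : List ℕ) (R : Fin μ.length → Finset (Fin n)) : Prop :=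
  (∀ r, (R r).card = μ.get r) ∧
  (∀ r s, r ≠ s → Disjoint (R r) (R s)) ∧
  (∀ i, ∃ r, i ∈ R r)

/-- A `μ`-tabloid: an ordered partition of `{1, …, n}` with block sizes `μ₁, …, μ_ℓ`. -/
def Tabloid (n : ℕ) (μ : List ℕ) := {R : Fin μ.length → Finset (Fin n) // IsTabloid n μ R}

variable {n : ℕ} {μ : List ℕ}

/-- The action of a permutation on a tabloid, applying it to each row. -/
def permTabloid (π : Equiv.Perm (Fin n)) (R : Tabloid n μ) : Tabloid n μ :=
  ⟨fun r => (R.1 r).image π, by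
    obtain ⟨h1, h2, h3⟩ := R.2
    refine ⟨fun r => ?_, fun r s hrs => ?_, fun i => ?_⟩
    · rw [Finset.card_image_of_injective _ π.injective, h1 r]
    · exact (Finset.disjoint_image π.injective).mpr (h2 r s hrs)
    · obtain ⟨r, hr⟩ := h3 (π⁻¹ i)
      exact ⟨r, Finset.mem_image.mpr ⟨π⁻¹ i, hr, by simp⟩⟩⟩

/-- The action of a permutation on a tableau (postcomposition). -/
def permTableau (π : Equiv.Perm (Fin n)) (t : YoungTableau n μ) : YoungTableau n μ :=
  t.trans π

/-- The tabloid `{t}` determined by a tableau `t`: its `r`-th row is the set of entries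
in the `r`-th row of `t`. -/
def tabloidOf (t : YoungTableau n μ) : Tabloid n μ :=
  ⟨fun r => Finset.univ.image fun c : Fin (μ.get r) => t ⟨r, c⟩, by
    refine ⟨fun r => ?_, fun r s hrs => ?_, fun i => ?_⟩
    · rw [Finset.card_image_of_injective, Finset.card_univ, Fintype.card_fin]
      intro c₁ c₂ h
      have := t.injective h
      exact (Sigma.mk.inj_iff.mp this).2.eq
    · rw [Finset.disjoint_left]
      rintro a ha hb
      obtain ⟨c₁, -, h₁⟩ := Finset.mem_image.mp ha
      obtain ⟨c₂, -, h₂⟩ := Finset.mem_image.mp hb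
      have := t.injective (h₁.trans h₂.symm)
      exact hrs (Sigma.mk.inj_iff.mp this).1
    · refine ⟨(t.symm i).1,
        Finset.mem_image.mpr ⟨(t.symm i).2, Finset.mem_univ _, ?_⟩⟩
      exact t.apply_symm_apply i⟩

/-- The (index of the) row of a tableau containing a given symbol. -/
def rowIdx (t : YoungTableau n μ) (i : Fin n) : ℕ :=
  ((t.symm i).1 : ℕ)

/-- The (index of the) column of a tableau containing a given symbol. -/
def colIdx (t : YoungTableau n μ) (i : Fin n) : ℕ :=
  ((t.symm i).2 : ℕ)

/-- The column stabilizer `C_t` of a tableau: the permutations preserving each column. -/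
def colStab (t : YoungTableau n μ) : Finset (Equiv.Perm (Fin n)) :=
  Finset.univ.filter fun σ => ∀ i, colIdx t (σ i) = colIdx t i

/-- Membership in the row stabilizer `R_t` of a tableau. -/
def memRowStab (t : YoungTableau n μ) (π : Equiv.Perm (Fin n)) : Prop :=
  ∀ i, rowIdx t (π i) = rowIdx t i

/-- The polytabloid `e_t = Σ_{σ ∈ C_t} sgn(σ)·{σt}` of a tableau `t`, an element of the
free `ℤ`-module `M^μ` on the `μ`-tabloids. -/
def polytabloid (t : YoungTableau n μ) : Tabloid n μ →₀ ℤ :=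
  ∑ σ ∈ colStab t, ((Equiv.Perm.sign σ : ℤˣ) : ℤ) • Finsupp.single (tabloidOf (permTableau σ t)) 1

/-- The symmetric bilinear form on `M^μ` making the tabloids orthonormal. -/
def tabForm (x y : Tabloid n μ →₀ ℤ) : ℤ :=
  x.sum fun T a => a * y T

/-- The action of a permutation on `M^μ`, permuting the tabloid basis. -/
def permMap (π : Equiv.Perm (Fin n)) (x : Tabloid n μ →₀ ℤ) : Tabloid n μ →₀ ℤ :=
  Finsupp.mapDomain (permTabloid π) x

/-- `supp(t)`: the set of tabloids `{σt}` for `σ ∈ C_t`. -/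
def tabSupp (t : YoungTableau n μ) : Finset (Tabloid n μ) :=
  (colStab t).image fun σ => tabloidOf (permTableau σ t)

theorem Function.Involutive.card_filter_eq_self_cast_zmod_two {α : Type*} {f : α → α}
    (hf : Function.Involutive f) {s : Finset α} (hs : ∀ a ∈ s, f a ∈ s) :
    ((s.filter fun a => f a = a).card : ZMod 2) = s.card := by
  have hmoved : ∑ _a ∈ s.filter (fun a => ¬f a = a), (1 : ZMod 2) = 0 := by
    refine Finset.sum_involution (fun a _ => f a) (fun _ _ => by decide)
      (fun a ha _ => (Finset.mem_filter.mp ha).2) (fun a ha => ?_) (fun a _ => hf a)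
    obtain ⟨has, hfa⟩ := Finset.mem_filter.mp ha
    exact Finset.mem_filter.mpr ⟨hs a has, by rwa [hf a, eq_comm]⟩
  rw [Finset.sum_const, nsmul_one] at hmoved
  rw [← Finset.card_filter_add_card_filter_not (s := s) (fun a => f a = a), Nat.cast_add, hmoved,
    add_zero]

instance : Fintype (Tabloid n μ) := Subtype.fintype _

section Tableaux

variable (π : Equiv.Perm (Fin n)) (t : YoungTableau n μ)

lemma permTableau_mul (σ : Equiv.Perm (Fin n)) :
    permTableau π (permTableau σ t) = permTableau (π * σ) t := rfl

lemma permTableau_one : permTableau 1 t = t := Equiv.trans_refl t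

lemma colIdx_permTableau (i : Fin n) : colIdx (permTableau π t) i = colIdx t (π⁻¹ i) := rfl

variable {t} in
lemma eq_of_rowIdx_eq_of_colIdx_eq {i j : Fin n} (hr : rowIdx t i = rowIdx t j)
    (hc : colIdx t i = colIdx t j) : i = j :=
  t.symm.injective <| Sigma.ext (Fin.ext hr) ((Fin.heq_ext_iff (by rw [Fin.ext hr])).mpr hc)

lemma mem_tabloidOf_iff (r : Fin μ.length) (i : Fin n) :
    i ∈ (tabloidOf t).1 r ↔ (t.symm i).1 = r := by
  simp only [tabloidOf, Finset.mem_image, Finset.mem_univ, true_and]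
  constructor
  · rintro ⟨c, rfl⟩
    simp
  · rintro rfl
    exact ⟨(t.symm i).2, t.apply_symm_apply i⟩

variable {t} in
lemma rowIdx_eq_of_tabloidOf_eq {t' : YoungTableau n μ} (h : tabloidOf t = tabloidOf t')
    (i : Fin n) : rowIdx t i = rowIdx t' i := by
  have hi : i ∈ (tabloidOf t').1 (t.symm i).1 := by rw [← h, mem_tabloidOf_iff]
  rw [rowIdx, rowIdx, (mem_tabloidOf_iff t' _ i).mp hi]

lemma permTabloid_tabloidOf : permTabloid π (tabloidOf t) = tabloidOf (permTableau π t) := by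
  apply Subtype.ext
  funext r
  simp only [permTabloid, tabloidOf, Finset.image_image]
  rfl

lemma permTabloid_mul (σ : Equiv.Perm (Fin n)) (T : Tabloid n μ) :
    permTabloid π (permTabloid σ T) = permTabloid (π * σ) T := by
  apply Subtype.ext
  funext r
  simp [permTabloid, Finset.image_image]

lemma permTabloid_one (T : Tabloid n μ) : permTabloid 1 T = T := by
  apply Subtype.ext
  funext r
  simp [permTabloid]

variable {π} in
lemma permTabloid_involutive (hπ : π ^ 2 = 1) :
    Function.Involutive (permTabloid π : Tabloid n μ → Tabloid n μ) := fun T => by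
  rw [permTabloid_mul, ← sq, hπ, permTabloid_one]

variable {t} in
lemma mem_colStab {σ : Equiv.Perm (Fin n)} :
    σ ∈ colStab t ↔ ∀ i, colIdx t (σ i) = colIdx t i := by
  simp [colStab]

lemma mem_colStab_permTableau {ρ : Equiv.Perm (Fin n)} :
    ρ ∈ colStab (permTableau π t) ↔ π⁻¹ * ρ * π ∈ colStab t := by
  simp only [mem_colStab, colIdx_permTableau, Equiv.Perm.mul_apply]
  exact ⟨fun h i => by simpa using h (π i), fun h i => by simpa using h (π⁻¹ i)⟩

lemma colStab_permTableau :
    colStab (permTableau π t) = (colStab t).map (MulAut.conj π).toEquiv.toEmbedding := by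
  ext ρ
  rw [mem_colStab_permTableau, Finset.mem_map_equiv]
  simp [mul_assoc]

lemma tabloidOf_permTableau_injOn :
    Set.InjOn (fun σ => tabloidOf (permTableau σ t)) (colStab t) := by
  intro σ hσ τ hτ h
  rw [Finset.mem_coe, mem_colStab] at hσ hτ
  refine inv_injective (Equiv.ext fun i => eq_of_rowIdx_eq_of_colIdx_eq (t := t) ?_ ?_)
  · exact rowIdx_eq_of_tabloidOf_eq h i
  · have hσi := hσ (σ⁻¹ i)
    have hτi := hτ (τ⁻¹ i)
    simp only [Equiv.Perm.coe_inv, Equiv.apply_symm_apply] at hσi hτi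
    exact hσi.symm.trans hτi

lemma tabSupp_permTableau : tabSupp (permTableau π t) = (tabSupp t).image (permTabloid π) := by
  simp only [tabSupp, colStab_permTableau, Finset.map_eq_image, Finset.image_image]
  refine Finset.image_congr fun σ _ => ?_
  simp [permTabloid_tabloidOf, permTableau_mul]

end Tableaux

lemma Int.cast_units_zmod_two (u : ℤˣ) : ((u : ℤ) : ZMod 2) = 1 := by
  rcases Int.units_eq_one_or u with rfl | rfl <;> decide

lemma permMap_polytabloid (π : Equiv.Perm (Fin n)) (t : YoungTableau n μ) :
    permMap π (polytabloid t) = polytabloid (permTableau π t) := by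
  rw [permMap, polytabloid, polytabloid, colStab_permTableau, Finset.sum_map,
    Finsupp.mapDomain_finsetSum]
  refine Finset.sum_congr rfl fun σ _ => ?_
  rw [Finsupp.mapDomain_smul, Finsupp.mapDomain_single, permTabloid_tabloidOf]
  simp [permTableau_mul, mul_right_comm _ _ (Equiv.Perm.sign π), Int.units_mul_self]

lemma polytabloid_apply_cast_zmod_two (t : YoungTableau n μ) (T : Tabloid n μ) :
    ((polytabloid t T : ℤ) : ZMod 2) = if T ∈ tabSupp t then 1 else 0 := by
  rw [← Finset.sum_ite_eq' (tabSupp t) T fun _ => (1 : ZMod 2), tabSupp,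
    Finset.sum_image (tabloidOf_permTableau_injOn t), polytabloid, Finsupp.finsetSum_apply,
    Int.cast_sum]
  refine Finset.sum_congr rfl fun σ _ => ?_
  rw [Finsupp.smul_apply, Finsupp.single_apply, smul_eq_mul, Int.cast_mul, Int.cast_units_zmod_two,
    one_mul]
  split_ifs <;> simp

lemma tabForm_polytabloid_cast_zmod_two (s t : YoungTableau n μ) :
    ((tabForm (polytabloid s) (polytabloid t) : ℤ) : ZMod 2) =
      (tabSupp s ∩ tabSupp t).card := by
  rw [tabForm, Finsupp.sum_fintype _ _ fun _ => zero_mul _, Int.cast_sum]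
  simp only [Int.cast_mul, polytabloid_apply_cast_zmod_two, ite_zero_mul_ite_zero, mul_one]
  rw [Finset.sum_boole]
  congr 2
  ext
  simp

theorem tabForm_polytabloid_modEq_card_fixed_general
    (t : YoungTableau n μ) (π : Equiv.Perm (Fin n)) (hπ : π ^ 2 = 1) :
    tabForm (permMap π (polytabloid t)) (polytabloid t)
      ≡ (((tabSupp (permTableau π t) ∩ tabSupp t).filter
            fun T => permTabloid π T = T).card : ℤ) [ZMOD 2] := by
  have hππt : permTableau π (permTableau π t) = t := by
    rw [permTableau_mul, ← sq, hπ, permTableau_one]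
  have hstable : ∀ T ∈ tabSupp (permTableau π t) ∩ tabSupp t,
      permTabloid π T ∈ tabSupp (permTableau π t) ∩ tabSupp t := by
    intro T hT
    rw [Finset.mem_inter] at hT ⊢
    refine ⟨?_, ?_⟩
    · rw [tabSupp_permTableau]; exact Finset.mem_image_of_mem _ hT.2
    · rw [← hππt, tabSupp_permTableau]; exact Finset.mem_image_of_mem _ hT.1
  refine (ZMod.intCast_eq_intCast_iff _ _ 2).mp ?_
  rw [permMap_polytabloid, tabForm_polytabloid_cast_zmod_two,
    Int.cast_natCast, (permTabloid_involutive hπ).card_filter_eq_self_cast_zmod_two hstable]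

/-- Let `μ` be a partition of `n` with distinct parts, `t` a `μ`-tableau and `π ∈ S_n` an
involution.  Then `⟨π·e_t, e_t⟩ ≡ #{T ∈ supp(πt) ∩ supp(t) : π·T = T} (mod 2)`. -/
theorem tabForm_polytabloid_modEq_card_fixed
    (hpos : ∀ i ∈ μ, 0 < i) (hdist : μ.Chain' (· > ·)) (hsum : μ.sum = n)
    (t : YoungTableau n μ) (π : Equiv.Perm (Fin n)) (hπ : π ^ 2 = 1) (hπ1 : π ≠ 1) :
    tabForm (permMap π (polytabloid t)) (polytabloid t)
      ≡ (((tabSupp (permTableau π t) ∩ tabSupp t).filter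
            fun T => permTabloid π T = T).card : ℤ) [ZMOD 2] :=
  tabForm_polytabloid_modEq_card_fixed_general t π hπ

end
end

section
/- If μ is a partition of n with distinct parts, then |μ|_a ≡ n (mod 2), ℓ_o(μ) ≡ n (mod 2), and ℓ_o(μ) ≤ |μ|_a. -/
/-!
List the parts decreasingly as `μ₁ > μ₂ > ⋯` and pair them up as `(μ₁, μ₂), (μ₃, μ₄), …`.
Each difference `μ₂ᵢ₋₁ - μ₂ᵢ` is positive and, when both parts are odd, even, so it is at least
the number of odd parts in its pair; a trailing unpaired part is at least `1` when it is odd.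
Summing gives `ℓ_o(μ) ≤ |μ|_a`. The congruences hold because `-x ≡ x` and `x ≡ [x odd] (mod 2)`.
-/

noncomputable def Nat.Partition.altSum {n : ℕ} (μ : Nat.Partition n) : ℤ :=
  (((μ.parts.sort (· ≤ ·)).reverse).map fun i => (i : ℤ)).alternatingSum

def Nat.Partition.oddPartsCount {n : ℕ} (μ : Nat.Partition n) : ℕ :=
  Multiset.card (μ.parts.filter fun i => Odd i)

/-- `Nat.Partition.altSum` elaborates its list coercion as `l >>= pure ∘ Nat.cast`,
not as `l.map Nat.cast`. -/
theorem Nat.Partition.altSum_eq {n : ℕ} (μ : Nat.Partition n) :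
    μ.altSum = ((μ.parts.sort (· ≤ ·)).reverse.map ((↑) : ℕ → ℤ)).alternatingSum := by
  rw [Nat.Partition.altSum, List.bind_eq_flatMap, List.map_id', ← List.flatMap_pure_eq_map]
  rfl

theorem List.alternatingSum_modEq_sum : ∀ l : List ℤ, l.alternatingSum ≡ l.sum [ZMOD 2]
  | [] => rfl
  | [_] => by simp
  | a :: b :: t => by
    rw [List.alternatingSum_cons_cons, List.sum_cons, List.sum_cons, ← add_assoc]
    exact (Int.modEq_iff_dvd.mpr ⟨b, by ring⟩).add t.alternatingSum_modEq_sum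

theorem Multiset.card_filter_odd_modEq_sum (s : Multiset ℕ) :
    card (s.filter Odd) ≡ s.sum [MOD 2] := by
  induction s using Multiset.induction_on with
  | empty => rfl
  | cons a s ih =>
    rw [Nat.ModEq] at *
    rcases Nat.even_or_odd a with ha | ha
    · rw [Multiset.filter_cons_of_neg _ (Nat.not_odd_iff_even.mpr ha), Multiset.sum_cons]
      obtain ⟨k, rfl⟩ := ha
      omega
    · rw [Multiset.filter_cons_of_pos _ ha, Multiset.sum_cons, Multiset.card_cons]
      obtain ⟨k, rfl⟩ := ha
      omega

theorem Multiset.pairwise_gt_reverse_sort {α : Type*} [LinearOrder α] {s : Multiset α}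
    (hs : s.Nodup) : (s.sort (· ≤ ·)).reverse.Pairwise (· > ·) := by
  have hnodup : (s.sort (· ≤ ·)).Nodup := by rwa [← Multiset.coe_nodup, Multiset.sort_eq]
  exact List.pairwise_reverse.mpr
    ((Multiset.pairwise_sort s _).sortedLE.sortedLT_of_nodup hnodup).pairwise

theorem List.countP_odd_le_alternatingSum :
    ∀ l : List ℕ, l.Pairwise (· > ·) →
      (l.countP (Odd ·) : ℤ) ≤ (l.map ((↑) : ℕ → ℤ)).alternatingSum
  | [], _ => by simp
  | [a], _ => by
    rw [List.countP_singleton]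
    simp only [List.map_cons, List.map_nil, List.alternatingSum_singleton, decide_eq_true_eq]
    split_ifs with ha
    · exact_mod_cast ha.pos
    · positivity
  | a :: b :: t, h => by
    have hab : b < a := List.rel_of_pairwise_cons h (by simp)
    -- two distinct odd numbers differ by at least 2
    have hpair : ((if Odd a then 1 else 0) + (if Odd b then 1 else 0) : ℤ) ≤ a - b := by
      simp only [Nat.odd_iff]
      split_ifs <;> omega
    have ih := List.countP_odd_le_alternatingSum t h.tail.tail
    simp only [List.countP_cons, List.map_cons, List.alternatingSum_cons_cons, decide_eq_true_eq]
    push_cast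
    linarith

/-- If `μ` is a partition of `n` with distinct parts, then `|μ|_a ≡ n (mod 2)`,
`ℓ_o(μ) ≡ n (mod 2)`, and `ℓ_o(μ) ≤ |μ|_a`. -/
theorem altSum_mod_two_and_oddPartsCount_le {n : ℕ} (μ : Nat.Partition n)
    (hdist : μ.parts.Nodup) :
    μ.altSum ≡ (n : ℤ) [ZMOD 2] ∧
    μ.oddPartsCount ≡ n [MOD 2] ∧
    (μ.oddPartsCount : ℤ) ≤ μ.altSum := by
  set l := (μ.parts.sort (· ≤ ·)).reverse
  have hl : (l : Multiset ℕ) = μ.parts := by rw [Multiset.coe_reverse, Multiset.sort_eq]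
  have hsum : (l.map ((↑) : ℕ → ℤ)).sum = n := by
    rw [← Nat.cast_list_sum, ← Multiset.sum_coe, hl, μ.parts_sum]
  have hcount : μ.oddPartsCount = l.countP (Odd ·) := by
    rw [Nat.Partition.oddPartsCount, ← hl, ← Multiset.countP_eq_card_filter, Multiset.coe_countP]
  refine ⟨?_, ?_, ?_⟩
  · rw [μ.altSum_eq, ← hsum]
    exact (l.map _).alternatingSum_modEq_sum
  · exact μ.parts.card_filter_odd_modEq_sum.trans (by rw [μ.parts_sum])
  · rw [hcount, μ.altSum_eq]
    exact l.countP_odd_le_alternatingSum (Multiset.pairwise_gt_reverse_sort hdist)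
end
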